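/- arXiv:1711.01873 — 6 statements merged into one kernel-verified Lean document; each statement's English description precedes it below -/
import Mathlib

section
/- Fix n ≥ 1, m ≥ 2, integers ν_1,…,ν_{m−1} ≥ 0 with the convention ν_m = 0, and continuous functions V_1,…,V_{m−1} : [0,∞) → [0,∞) such that all integrals below converge absolutely. For k ∈ {1,…,n} and y > 0 define ψ_k(y) = ∫_{(0,∞)^{m−1}} t_1^{ν_1+k−1} ∏_{l=2}^{m−1}(t_l/t_{l−1})^{ν_l} exp(−t_1 − ∑_{l=2}^{m−1} t_l/t_{l−1} − y/t_{m−1} − ∑_{l=1}^{m−1} V_l(t_l)) (dt_1/t_1)⋯(dt_{m−1}/t_{m−1}). Then for every fixed y^m ∈ (0,∞)^n one has ∫_{((0,∞)^n)^{m−1}} ∏_{l=1}^{m−1} det[(y_j^{l+1})^{ν_{l+1}} (y_k^l)^{−ν_{l+1}−1} exp(−y_j^{l+1}/y_k^l − V_l(y_k^l))]_{j,k=1}^n · det[(y_j^1)^{ν_1+k−1} e^{−y_j^1}]_{j,k=1}^n dy^1⋯dy^{m−1} = (n!)^{m−1} det[ψ_k(y_j^m)]_{j,k=1}^n. -/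
/-!
Expand every determinant by the Leibniz formula. A term is indexed by one permutation `σ_l` per
level and one permutation `ρ` for the bottom determinant. Composing the `σ_l` from the top down
attaches to every top coordinate `y^m_i` one coordinate on each lower level, so the variables
split into `n` disjoint chains. The signs of the `σ_l` multiply to the sign of the composite,
which the bottom determinant absorbs by permuting its rows; the term becomes `sign ρ` times a
product over `i` of the integrand of `ψ_{ρ i}(y^m_i)` evaluated along the `i`-th chain
(`ν_m = 0` removes the power at the top). Fubini factorises its integral, the sum over `ρ` gives
`det[ψ_k(y^m_j)]`, and this is the same for each of the `(n!)^{m-1}` choices of the `σ_l`.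
-/

open MeasureTheory Real Set Finset

/-- First index of `Fin (m-1)` (corresponding to `t_1`). -/
def idx0 (m : ℕ) (hm : 2 ≤ m) : Fin (m - 1) := ⟨0, by omega⟩

/-- Last index of `Fin (m-1)` (corresponding to `t_{m-1}`). -/
def idxLast (m : ℕ) (hm : 2 ≤ m) : Fin (m - 1) := ⟨m - 2, by omega⟩

/-- For `l : Fin (m-2)`, the index of `t_{l+1}` (lower index of the ratio `t_{l+2}/t_{l+1}`). -/
def idxLo {m : ℕ} (l : Fin (m - 2)) : Fin (m - 1) := ⟨(l : ℕ), by have := l.isLt; omega⟩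

/-- For `l : Fin (m-2)`, the index of `t_{l+2}` (upper index of the ratio). -/
def idxHi {m : ℕ} (l : Fin (m - 2)) : Fin (m - 1) := ⟨(l : ℕ) + 1, by have := l.isLt; omega⟩

/-- The function `ψ_k(y)` (for the 0-based index `k : Fin n`, corresponding to the 1-based
index `k+1`):
`ψ_k(y) = ∫_{(0,∞)^{m−1}} t_1^{ν_1+k−1} ∏_{l=2}^{m−1}(t_l/t_{l−1})^{ν_l}
  exp(−t_1 − ∑_{l=2}^{m−1} t_l/t_{l−1} − y/t_{m−1} − ∑_{l=1}^{m−1} V_l(t_l))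
  (dt_1/t_1)⋯(dt_{m−1}/t_{m−1})`. -/
noncomputable def psiFun (n m : ℕ) (hm : 2 ≤ m) (ν : ℕ → ℕ) (V : Fin (m - 1) → ℝ → ℝ)
    (k : Fin n) (y : ℝ) : ℝ :=
  ∫ t in {t : Fin (m - 1) → ℝ | ∀ l, 0 < t l},
    (t (idx0 m hm)) ^ (ν 1 + (k : ℕ)) *
      (∏ l : Fin (m - 2), (t (idxHi l) / t (idxLo l)) ^ (ν ((l : ℕ) + 2))) *
      Real.exp (-(t (idx0 m hm)) - (∑ l : Fin (m - 2), t (idxHi l) / t (idxLo l))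
        - y / t (idxLast m hm) - ∑ l : Fin (m - 1), V l (t l)) *
      ∏ l : Fin (m - 1), (t l)⁻¹

open Equiv

section SuffixProd

variable {G : Type*} [Monoid G] {M : ℕ}

def suffixProd (σ : Fin M → G) (l : ℕ) : G := ((List.ofFn σ).drop l).prod

theorem suffixProd_self (σ : Fin M → G) : suffixProd σ M = 1 := by
  simp [suffixProd, List.drop_eq_nil_of_le]

theorem suffixProd_eq_mul_succ (σ : Fin M → G) (l : Fin M) :
    suffixProd σ l = σ l * suffixProd σ (l + 1) := by
  rw [suffixProd, List.drop_eq_getElem_cons (by simp)]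
  simp [suffixProd]

theorem sign_suffixProd_zero {κ : Type*} [Fintype κ] [DecidableEq κ] (σ : Fin M → Perm κ) :
    Perm.sign (suffixProd σ 0) = ∏ l, Perm.sign (σ l) := by
  rw [suffixProd, List.drop_zero, map_list_prod, List.map_ofFn, Fin.prod_ofFn]; rfl

end SuffixProd

theorem Matrix.det_eq_sum_sign_mul_prod_apply {R κ : Type*} [CommRing R] [Fintype κ]
    [DecidableEq κ] (A : Matrix κ κ R) :
    A.det = ∑ σ : Perm κ, (Perm.sign σ : R) * ∏ i, A i (σ i) := by
  rw [← Matrix.det_transpose, Matrix.det_apply']; rfl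

/-- `t 0` is the bottom level and `t (Fin.last M)` the top one; `K l u v` weighs the step from the
value `u` on level `l + 1` down to the value `v` on level `l`. -/
def chainWeight {R X κ : Type*} [CommMonoid R] {M : ℕ} (K : Fin M → X → X → R) (b : κ → X → R)
    (c : κ) (t : Fin (M + 1) → X) : R :=
  b c (t 0) * ∏ l : Fin M, K l (t l.succ) (t l.castSucc)

section ChainExpansion

variable {R X κ : Type*} [CommRing R] [Fintype κ] [DecidableEq κ] {M : ℕ}

theorem prod_sign_mul_prod_mul_det_eq_sum_chainWeight (K : Fin M → X → X → R)
    (b : κ → X → R) (x : Fin (M + 1) → κ → X) (σ : Fin M → Perm κ) :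
    (∏ l, (Perm.sign (σ l) : R) * ∏ j, K l (x l.succ j) (x l.castSucc (σ l j))) *
        (Matrix.of fun j c => b c (x 0 j)).det =
      ∑ ρ : Perm κ, (Perm.sign ρ : R) *
        ∏ i, chainWeight K b (ρ i) fun l => x l (suffixProd σ l i) := by
  set Q := suffixProd σ
  have hlevel (l : Fin M) : ∏ j, K l (x l.succ j) (x l.castSucc (σ l j)) =
      ∏ i, K l (x l.succ (Q (l + 1) i)) (x l.castSucc (Q l i)) := by
    rw [← Equiv.prod_comp (Q (l + 1))]
    simp only [Q, suffixProd_eq_mul_succ σ l, Perm.mul_apply]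
  have hsign : ∏ l, (Perm.sign (σ l) : R) = Perm.sign (Q 0) := by
    rw [sign_suffixProd_zero]; push_cast; rfl
  have hbottom : (Perm.sign (Q 0) : R) * (Matrix.of fun j c => b c (x 0 j)).det =
      ∑ ρ : Perm κ, (Perm.sign ρ : R) * ∏ i, b (ρ i) (x 0 (Q 0 i)) := by
    rw [← Matrix.det_permute, Matrix.det_eq_sum_sign_mul_prod_apply]; rfl
  calc _ = (∏ i, ∏ l : Fin M, K l (x l.succ (Q (l + 1) i)) (x l.castSucc (Q l i))) *
        ((Perm.sign (Q 0) : R) * (Matrix.of fun j c => b c (x 0 j)).det) := by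
        rw [prod_mul_distrib, hsign, prod_congr rfl fun l _ => hlevel l, prod_comm]; ring
    _ = _ := by
        rw [hbottom, mul_sum]
        refine sum_congr rfl fun ρ _ => ?_
        rw [mul_left_comm, ← prod_mul_distrib]
        simp only [chainWeight, mul_comm, Fin.val_succ, Fin.val_castSucc, Fin.val_zero]

theorem prod_det_mul_det_eq_sum_chainWeight (K : Fin M → X → X → R) (b : κ → X → R)
    (x : Fin (M + 1) → κ → X) :
    (∏ l : Fin M, (Matrix.of fun j k => K l (x l.succ j) (x l.castSucc k)).det) *
        (Matrix.of fun j c => b c (x 0 j)).det =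
      ∑ σ : Fin M → Perm κ, ∑ ρ : Perm κ, (Perm.sign ρ : R) *
        ∏ i, chainWeight K b (ρ i) fun l => x l (suffixProd σ l i) := by
  simp_rw [Matrix.det_eq_sum_sign_mul_prod_apply (Matrix.of fun j k => K _ _ _), Matrix.of_apply,
    Fintype.prod_sum, sum_mul, prod_sign_mul_prod_mul_det_eq_sum_chainWeight]

end ChainExpansion

section Chains

variable {ι κ α : Type*} [MeasurableSpace α]

def chainsEquiv (Q : ι → Perm κ) : (ι → κ → α) ≃ᵐ (κ → ι → α) where
  toFun y k l := y l (Q l k)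
  invFun z l k := z ((Q l).symm k) l
  left_inv y := by ext; simp
  right_inv z := by ext; simp
  measurable_toFun := by
    change Measurable fun (y : ι → κ → α) k l => y l (Q l k); fun_prop
  measurable_invFun := by
    change Measurable fun (z : κ → ι → α) l k => z ((Q l).symm k) l; fun_prop

@[simp]
theorem chainsEquiv_apply (Q : ι → Perm κ) (y : ι → κ → α) (k : κ) (l : ι) :
    chainsEquiv Q y k l = y l (Q l k) := rfl

variable [Fintype ι] [Fintype κ] (μ : Measure α) [SigmaFinite μ] (Q : ι → Perm κ)

theorem measurePreserving_chainsEquiv :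
    MeasurePreserving (chainsEquiv Q)
      (Measure.pi fun _ : ι => Measure.pi fun _ : κ => μ)
      (Measure.pi fun _ : κ => Measure.pi fun _ : ι => μ) := by
  refine ⟨(chainsEquiv Q).measurable, (Measure.pi_eq_generateFrom (fun _ => generateFrom_pi)
    (fun _ => isPiSystem_pi) (fun _ => .pi fun _ => μ.toFiniteSpanningSetsIn) ?_).symm⟩
  intro s hs
  choose t ht hst using hs
  have hpre : chainsEquiv Q ⁻¹' univ.pi s =
      univ.pi fun l => univ.pi fun k => t ((Q l).symm k) l := by
    ext y
    simp only [← hst, Set.mem_preimage, Set.mem_univ_pi, chainsEquiv_apply]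
    exact ⟨fun h l k => by simpa using h ((Q l).symm k) l, fun h k l => by simpa using h l (Q l k)⟩
  rw [(chainsEquiv Q).map_apply, hpre, Measure.pi_pi]
  simp_rw [Measure.pi_pi, ← hst, Measure.pi_pi]
  exact (prod_congr rfl fun l _ => Equiv.prod_comp (Q l).symm fun k => μ (t k l)).trans prod_comm

variable {𝕜 : Type*} [RCLike 𝕜]

theorem integrable_prod_comp_chains {h : κ → (ι → α) → 𝕜}
    (hh : ∀ k, Integrable (h k) (Measure.pi fun _ => μ)) :
    Integrable (fun y : ι → κ → α => ∏ k, h k fun l => y l (Q l k))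
      (Measure.pi fun _ => Measure.pi fun _ => μ) :=
  ((measurePreserving_chainsEquiv μ Q).integrable_comp_emb
    (chainsEquiv Q).measurableEmbedding).2 (Integrable.fintype_prod hh)

theorem integral_prod_comp_chains (h : κ → (ι → α) → 𝕜) :
    ∫ y : ι → κ → α, (∏ k, h k fun l => y l (Q l k))
        ∂(Measure.pi fun _ => Measure.pi fun _ => μ) =
      ∏ k, ∫ t, h k t ∂(Measure.pi fun _ => μ) := by
  rw [← integral_fintype_prod_eq_prod, ← (measurePreserving_chainsEquiv μ Q).integral_comp']
  rfl

end Chains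

theorem volume_restrict_setOf_forall_pos {ι : Type*} [Fintype ι] :
    (volume : Measure (ι → ℝ)).restrict {t | ∀ i, 0 < t i} =
      Measure.pi fun _ => volume.restrict (Ioi 0) := by
  rw [show {t : ι → ℝ | ∀ i, 0 < t i} = Set.univ.pi fun _ => Ioi 0 by ext; simp, volume_pi,
    Measure.restrict_pi_pi]

theorem volume_restrict_setOf_forall_forall_pos {ι κ : Type*} [Fintype ι] [Fintype κ] :
    (volume : Measure (ι → κ → ℝ)).restrict {y | ∀ l j, 0 < y l j} =
      Measure.pi fun _ => Measure.pi fun _ => volume.restrict (Ioi 0) := by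
  rw [show {y : ι → κ → ℝ | ∀ l j, 0 < y l j} = Set.univ.pi fun _ => {t | ∀ j, 0 < t j} by
    ext; simp, volume_pi, Measure.restrict_pi_pi]
  simp_rw [volume_restrict_setOf_forall_pos]

noncomputable def transitionKernel {M : ℕ} (ν : ℕ → ℕ) (V : Fin M → ℝ → ℝ) (l : Fin M)
    (u v : ℝ) : ℝ :=
  u ^ ν (l + 2) * (v ^ (ν (l + 2) + 1))⁻¹ * exp (-(u / v) - V l v)

noncomputable def bottomWeight (ν : ℕ → ℕ) (c : ℕ) (v : ℝ) : ℝ := v ^ (ν 1 + c) * exp (-v)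

noncomputable def psiIntegrand (m : ℕ) (hm : 2 ≤ m) (ν : ℕ → ℕ) (V : Fin (m - 1) → ℝ → ℝ)
    (c : ℕ) (y : ℝ) (t : Fin (m - 1) → ℝ) : ℝ :=
  (t (idx0 m hm)) ^ (ν 1 + c) *
    (∏ l : Fin (m - 2), (t (idxHi l) / t (idxLo l)) ^ (ν ((l : ℕ) + 2))) *
    Real.exp (-(t (idx0 m hm)) - (∑ l : Fin (m - 2), t (idxHi l) / t (idxLo l))
      - y / t (idxLast m hm) - ∑ l : Fin (m - 1), V l (t l)) *
    ∏ l : Fin (m - 1), (t l)⁻¹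

theorem transitionKernel_eq {M : ℕ} (ν : ℕ → ℕ) (V : Fin M → ℝ → ℝ) (l : Fin M) (u v : ℝ) :
    transitionKernel ν V l u v = (u / v) ^ ν (l + 2) * v⁻¹ * exp (-(u / v)) * exp (-V l v) := by
  rw [transitionKernel, pow_succ, mul_inv, div_pow, sub_eq_add_neg, exp_add]
  ring

theorem chainWeight_snoc_eq {M n : ℕ} (ν : ℕ → ℕ) (hν : ν (M + 2) = 0)
    (V : Fin (M + 1) → ℝ → ℝ) (c : Fin n) (w : ℝ) (t : Fin (M + 1) → ℝ) :
    chainWeight (transitionKernel ν V) (fun c : Fin n => bottomWeight ν c) c (Fin.snoc t w) =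
      t 0 ^ (ν 1 + c) * (∏ l : Fin M, (t l.succ / t l.castSucc) ^ ν (l + 2)) *
        exp (-t 0 - ∑ l : Fin M, t l.succ / t l.castSucc - w / t (Fin.last M) -
          ∑ l, V l (t l)) *
        ∏ l, (t l)⁻¹ := by
  simp only [chainWeight, bottomWeight, Fin.prod_univ_castSucc (n := M), transitionKernel_eq,
    prod_mul_distrib, Fin.succ_castSucc, Fin.snoc_castSucc, Fin.succ_last, Fin.snoc_last,
    ← Fin.castSucc_zero, Fin.val_last, hν, pow_zero, Fin.sum_univ_castSucc (n := M)]
  simp only [Fin.val_castSucc, sub_eq_add_neg, neg_add, exp_add, ← sum_neg_distrib, exp_sum]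
  ring

theorem psiIntegrand_eq_chainWeight (m : ℕ) (hm : 2 ≤ m) (ν : ℕ → ℕ) (hνm : ν m = 0)
    (V : Fin (m - 1) → ℝ → ℝ) {n : ℕ} (c : Fin n) (w : ℝ) (t : Fin (m - 1) → ℝ) :
    psiIntegrand m hm ν V c w t =
      chainWeight (transitionKernel ν V) (fun c : Fin n => bottomWeight ν c) c (Fin.snoc t w) := by
  obtain ⟨M, rfl⟩ : ∃ M, m = M + 2 := ⟨m - 2, by omega⟩
  exact (chainWeight_snoc_eq ν hνm V c w t).symm

noncomputable def firstLevelsIntegrand (n m : ℕ) (hm : 2 ≤ m) (ν : ℕ → ℕ)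
    (V : Fin (m - 1) → ℝ → ℝ) (ym : Fin n → ℝ) (y : Fin (m - 1) → Fin n → ℝ) : ℝ :=
  (∏ l : Fin (m - 1),
    (Matrix.of fun j k : Fin n =>
      ((if hl : (l : ℕ) + 1 < m - 1 then y ⟨(l : ℕ) + 1, hl⟩ j else ym j) ^ (ν ((l : ℕ) + 2))) *
        ((y l k) ^ (ν ((l : ℕ) + 2) + 1))⁻¹ *
        Real.exp (-((if hl : (l : ℕ) + 1 < m - 1 then y ⟨(l : ℕ) + 1, hl⟩ j else ym j) / y l k)
          - V l (y l k))).det) *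
    (Matrix.of fun j k : Fin n =>
      (y (idx0 m hm) j) ^ (ν 1 + (k : ℕ)) * Real.exp (-(y (idx0 m hm) j))).det

theorem firstLevelsIntegrand_eq_sum {n m : ℕ} (hm : 2 ≤ m) {ν : ℕ → ℕ} (hνm : ν m = 0)
    (V : Fin (m - 1) → ℝ → ℝ) (ym : Fin n → ℝ) (y : Fin (m - 1) → Fin n → ℝ) :
    firstLevelsIntegrand n m hm ν V ym y =
      ∑ σ : Fin (m - 1) → Perm (Fin n), ∑ ρ : Perm (Fin n), (Perm.sign ρ : ℝ) *
        ∏ i, psiIntegrand m hm ν V (ρ i) (ym i) fun l => y l (suffixProd σ l i) := by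
  set x : Fin (m - 1 + 1) → Fin n → ℝ := Fin.snoc y ym
  have hx_zero : x 0 = y (idx0 m hm) := by
    rw [show (0 : Fin (m - 1 + 1)) = (idx0 m hm).castSucc from rfl]
    exact Fin.snoc_castSucc _ _ _
  have hx_succ (l : Fin (m - 1)) (j : Fin n) :
      x l.succ j = if hl : (l : ℕ) + 1 < m - 1 then y ⟨l + 1, hl⟩ j else ym j := by
    simp only [x, Fin.snoc, Fin.val_succ]; split_ifs <;> rfl
  have hchain (σ : Fin (m - 1) → Perm (Fin n)) (i : Fin n) :
      (fun l => x l (suffixProd σ l i)) = Fin.snoc (fun l => y l (suffixProd σ l i)) (ym i) := by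
    funext l
    refine Fin.lastCases ?_ (fun l => ?_) l <;> simp [x, suffixProd_self]
  have := prod_det_mul_det_eq_sum_chainWeight (transitionKernel ν V)
    (fun c : Fin n => bottomWeight ν c) x
  simp only [hchain, ← psiIntegrand_eq_chainWeight m hm ν hνm, x, Fin.snoc_castSucc, hx_zero,
    hx_succ] at this
  exact this

/-- Levels are 0-based: `y l` is the paper's `y^{l+1}`, `V l` the paper's `V_{l+1}`, and `ym` is
the fixed top level `y^m ∈ (0,∞)^n`. -/
theorem integrate_out_first_levels_general (n m : ℕ) (hm : 2 ≤ m)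
    (ν : ℕ → ℕ) (hνm : ν m = 0)
    (V : Fin (m - 1) → ℝ → ℝ)
    (ym : Fin n → ℝ) (hym : ∀ j, 0 < ym j)
    (hψ : ∀ (k : Fin n) (y : ℝ), 0 < y → IntegrableOn
      (fun t : Fin (m - 1) → ℝ =>
        (t (idx0 m hm)) ^ (ν 1 + (k : ℕ)) *
          (∏ l : Fin (m - 2), (t (idxHi l) / t (idxLo l)) ^ (ν ((l : ℕ) + 2))) *
          Real.exp (-(t (idx0 m hm)) - (∑ l : Fin (m - 2), t (idxHi l) / t (idxLo l))
            - y / t (idxLast m hm) - ∑ l : Fin (m - 1), V l (t l)) *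
          ∏ l : Fin (m - 1), (t l)⁻¹)
      {t : Fin (m - 1) → ℝ | ∀ l, 0 < t l}) :
    (∫ y in {y : Fin (m - 1) → Fin n → ℝ | ∀ l j, 0 < y l j},
        (∏ l : Fin (m - 1),
          (Matrix.of fun j k : Fin n =>
            ((if hl : (l : ℕ) + 1 < m - 1 then y ⟨(l : ℕ) + 1, hl⟩ j else ym j)
                ^ (ν ((l : ℕ) + 2))) *
              ((y l k) ^ (ν ((l : ℕ) + 2) + 1))⁻¹ *
              Real.exp
                (-((if hl : (l : ℕ) + 1 < m - 1 then y ⟨(l : ℕ) + 1, hl⟩ j else ym j) / y l k)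
                  - V l (y l k))).det) *
          (Matrix.of fun j k : Fin n =>
            (y (idx0 m hm) j) ^ (ν 1 + (k : ℕ)) * Real.exp (-(y (idx0 m hm) j))).det)
      = (n.factorial : ℝ) ^ (m - 1) *
        (Matrix.of fun j k : Fin n => psiFun n m hm ν V k (ym j)).det := by
  set μ : Measure ℝ := volume.restrict (Ioi 0)
  have hψ_pi (c j : Fin n) :
      Integrable (psiIntegrand m hm ν V c (ym j)) (Measure.pi fun _ => μ) := by
    rw [← volume_restrict_setOf_forall_pos]
    exact hψ c (ym j) (hym j)
  have hψFun (c : Fin n) (w : ℝ) :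
      psiFun n m hm ν V c w = ∫ t, psiIntegrand m hm ν V c w t ∂(Measure.pi fun _ => μ) := by
    rw [← volume_restrict_setOf_forall_pos]; rfl
  have hterm (σ : Fin (m - 1) → Perm (Fin n)) (ρ : Perm (Fin n)) :=
    (integrable_prod_comp_chains μ (fun l : Fin (m - 1) => suffixProd σ l)
      (h := fun i => psiIntegrand m hm ν V (ρ i) (ym i)) fun i => hψ_pi (ρ i) i).const_mul
      (Perm.sign ρ : ℝ)
  change ∫ y in _, firstLevelsIntegrand n m hm ν V ym y = _
  rw [volume_restrict_setOf_forall_forall_pos]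
  simp_rw [firstLevelsIntegrand_eq_sum hm hνm]
  calc _ = ∑ _σ : Fin (m - 1) → Perm (Fin n),
          (Matrix.of fun j k : Fin n => psiFun n m hm ν V k (ym j)).det := by
        rw [integral_finsetSum _ fun σ _ => integrable_finsetSum _ fun ρ _ => hterm σ ρ]
        refine sum_congr rfl fun σ _ => ?_
        rw [integral_finsetSum _ fun ρ _ => hterm σ ρ, Matrix.det_eq_sum_sign_mul_prod_apply]
        refine sum_congr rfl fun ρ _ => ?_
        rw [integral_const_mul, integral_prod_comp_chains]
        simp only [hψFun, Matrix.of_apply]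
    _ = _ := by
        rw [sum_const, card_univ, Fintype.card_fun, Fintype.card_perm, Fintype.card_fin,
          Fintype.card_fin, nsmul_eq_mul]
        push_cast; rfl

/-- Integrating the product of transition determinants over the first `m−1` levels gives
`(n!)^{m−1} det[ψ_k(y_j^m)]`.  Levels are 0-based: `y l` is the paper's `y^{l+1}`,
`V l` the paper's `V_{l+1}`, and `ym` is the fixed top level `y^m ∈ (0,∞)^n`. -/
theorem integrate_out_first_levels (n m : ℕ) (hn : 1 ≤ n) (hm : 2 ≤ m)
    (ν : ℕ → ℕ) (hνm : ν m = 0)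
    (V : Fin (m - 1) → ℝ → ℝ)
    (hVcont : ∀ l, ContinuousOn (V l) (Ici 0)) (hVnonneg : ∀ l x, 0 ≤ x → 0 ≤ V l x)
    (ym : Fin n → ℝ) (hym : ∀ j, 0 < ym j)
    (hψ : ∀ (k : Fin n) (y : ℝ), 0 < y → IntegrableOn
      (fun t : Fin (m - 1) → ℝ =>
        (t (idx0 m hm)) ^ (ν 1 + (k : ℕ)) *
          (∏ l : Fin (m - 2), (t (idxHi l) / t (idxLo l)) ^ (ν ((l : ℕ) + 2))) *
          Real.exp (-(t (idx0 m hm)) - (∑ l : Fin (m - 2), t (idxHi l) / t (idxLo l))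
            - y / t (idxLast m hm) - ∑ l : Fin (m - 1), V l (t l)) *
          ∏ l : Fin (m - 1), (t l)⁻¹)
      {t : Fin (m - 1) → ℝ | ∀ l, 0 < t l})
    (hL : IntegrableOn
      (fun y : Fin (m - 1) → Fin n → ℝ =>
        (∏ l : Fin (m - 1),
          (Matrix.of fun j k : Fin n =>
            ((if hl : (l : ℕ) + 1 < m - 1 then y ⟨(l : ℕ) + 1, hl⟩ j else ym j)
                ^ (ν ((l : ℕ) + 2))) *
              ((y l k) ^ (ν ((l : ℕ) + 2) + 1))⁻¹ *
              Real.exp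
                (-((if hl : (l : ℕ) + 1 < m - 1 then y ⟨(l : ℕ) + 1, hl⟩ j else ym j) / y l k)
                  - V l (y l k))).det) *
          (Matrix.of fun j k : Fin n =>
            (y (idx0 m hm) j) ^ (ν 1 + (k : ℕ)) * Real.exp (-(y (idx0 m hm) j))).det)
      {y : Fin (m - 1) → Fin n → ℝ | ∀ l j, 0 < y l j}) :
    (∫ y in {y : Fin (m - 1) → Fin n → ℝ | ∀ l j, 0 < y l j},
        (∏ l : Fin (m - 1),
          (Matrix.of fun j k : Fin n =>
            ((if hl : (l : ℕ) + 1 < m - 1 then y ⟨(l : ℕ) + 1, hl⟩ j else ym j)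
                ^ (ν ((l : ℕ) + 2))) *
              ((y l k) ^ (ν ((l : ℕ) + 2) + 1))⁻¹ *
              Real.exp
                (-((if hl : (l : ℕ) + 1 < m - 1 then y ⟨(l : ℕ) + 1, hl⟩ j else ym j) / y l k)
                  - V l (y l k))).det) *
          (Matrix.of fun j k : Fin n =>
            (y (idx0 m hm) j) ^ (ν 1 + (k : ℕ)) * Real.exp (-(y (idx0 m hm) j))).det)
      = (n.factorial : ℝ) ^ (m - 1) *
        (Matrix.of fun j k : Fin n => psiFun n m hm ν V k (ym j)).det :=
  integrate_out_first_levels_general n m hm ν hνm V ym hym hψ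
end

section
/- Fix integers n ≥ 1, m ≥ 2, a real b > 0 and integers ν_1,…,ν_{m−1} ≥ 0. For i,j ∈ {1,…,n} define a_{i,j}(b) = b^{j−1} ∫_{(0,∞)^{m−1}} t_1^{ν_1+i−1} ∏_{l=2}^{m−1}(t_l/t_{l−1})^{ν_l} · t_{m−1}^{j} · exp(−t_1 − ∑_{l=2}^{m−1} t_l/t_{l−1}) (dt_1/t_1)⋯(dt_{m−1}/t_{m−1}). Then det[a_{i,j}(b)]_{i,j=1}^n = b^{n(n−1)/2} ∏_{j=1}^{n} ( Γ(j) ∏_{l=1}^{m−1} Γ(j+ν_l) ). -/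
/-!
Substituting `t_l = s_1 ⋯ s_l` makes the ratios `t_l / t_{l-1}` independent variables `s_l`, and
its Jacobian `∏_l s_1 ⋯ s_{l-1}` exactly cancels against `∏ dt_l / t_l`, so each entry becomes a
product of Euler integrals:
`a_{i,j}(b) = b^{j-1} Γ(ν_1 + i + j - 1) ∏_{l ≥ 2} Γ(ν_l + j)`.
Pulling `b^{j-1} ∏_{l ≥ 2} Γ(ν_l + j)` out of column `j` and `Γ(ν_1 + i)` out of row `i` leaves
the rising factorials `(ν_1 + i)^{(j-1)}`, monic polynomials of degree `j - 1` in `ν_1 + i`; their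
determinant is the Vandermonde determinant of `1, …, n`, namely `∏_j Γ(j)`.
-/

open MeasureTheory Real Set Finset

section CumProd

variable {k : ℕ}

noncomputable def cumProd (s : Fin k → ℝ) : Fin k → ℝ := fun l => ∏ i ∈ Finset.Iic l, s i

noncomputable def succRatio (t : Fin k → ℝ) : Fin k → ℝ := fun l =>
  if (l : ℕ) = 0 then t l else t l / t ⟨l - 1, by omega⟩

lemma cumProd_zero (s : Fin k → ℝ) (hk : 0 < k) : cumProd s ⟨0, hk⟩ = s ⟨0, hk⟩ := by
  have : Finset.Iic (⟨0, hk⟩ : Fin k) = {⟨0, hk⟩} := by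
    ext i
    simp only [Finset.mem_Iic, Finset.mem_singleton, Fin.le_def, Fin.ext_iff]
    omega
  rw [cumProd, this, Finset.prod_singleton]

lemma cumProd_succ (s : Fin k → ℝ) {p : ℕ} (h : p + 1 < k) :
    cumProd s ⟨p + 1, h⟩ = cumProd s ⟨p, by omega⟩ * s ⟨p + 1, h⟩ := by
  have : Finset.Iic (⟨p + 1, h⟩ : Fin k) = insert ⟨p + 1, h⟩ (Finset.Iic ⟨p, by omega⟩) := by
    ext i
    simp only [Finset.mem_Iic, Finset.mem_insert, Fin.le_def, Fin.ext_iff]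
    omega
  rw [cumProd, this, Finset.prod_insert (by simp [Fin.le_def]), mul_comm]
  rfl

lemma cumProd_of_forall_le (s : Fin k → ℝ) {l : Fin k} (hl : ∀ i, i ≤ l) :
    cumProd s l = ∏ i, s i := by
  rw [cumProd]
  congr 1
  ext i
  simpa using hl i

lemma cumProd_pos {s : Fin k → ℝ} (hs : ∀ l, 0 < s l) (l : Fin k) : 0 < cumProd s l :=
  prod_pos fun i _ => hs i

lemma cumProd_succ_div {s : Fin k → ℝ} (hs : ∀ l, 0 < s l) {p : ℕ} (h : p + 1 < k) :
    cumProd s ⟨p + 1, h⟩ / cumProd s ⟨p, by omega⟩ = s ⟨p + 1, h⟩ := by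
  rw [cumProd_succ s h, mul_div_cancel_left₀ _ (cumProd_pos hs _).ne']

lemma succRatio_pos {t : Fin k → ℝ} (ht : ∀ l, 0 < t l) (l : Fin k) : 0 < succRatio t l := by
  unfold succRatio
  split_ifs
  exacts [ht l, div_pos (ht l) (ht _)]

lemma cumProd_succRatio {t : Fin k → ℝ} (ht : ∀ l, 0 < t l) : cumProd (succRatio t) = t := by
  funext ⟨p, hp⟩
  induction p with
  | zero => simp [cumProd_zero, succRatio]
  | succ p ih =>
    rw [cumProd_succ _ hp, ih (by omega)]
    simp [succRatio, mul_div_cancel₀ _ (ht _).ne']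

lemma succRatio_cumProd {s : Fin k → ℝ} (hs : ∀ l, 0 < s l) : succRatio (cumProd s) = s := by
  funext ⟨p, hp⟩
  cases p with
  | zero => simp [succRatio, cumProd_zero]
  | succ p => simpa [succRatio] using cumProd_succ_div hs hp

lemma injOn_cumProd : InjOn (cumProd (k := k)) {s | ∀ l, 0 < s l} := fun s hs s' hs' h => by
  rw [← succRatio_cumProd hs, ← succRatio_cumProd hs', h]

lemma image_cumProd : cumProd '' {s : Fin k → ℝ | ∀ l, 0 < s l} = {t | ∀ l, 0 < t l} := by
  refine Subset.antisymm ?_ fun t ht => ⟨succRatio t, succRatio_pos ht, cumProd_succRatio ht⟩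
  rintro _ ⟨s, hs, rfl⟩
  exact cumProd_pos hs

noncomputable def fderivCumProd (s : Fin k → ℝ) : (Fin k → ℝ) →L[ℝ] (Fin k → ℝ) :=
  ContinuousLinearMap.pi fun l =>
    ∑ i ∈ Finset.Iic l, (∏ j ∈ (Finset.Iic l).erase i, s j) • ContinuousLinearMap.proj i

lemma hasFDerivAt_cumProd (s : Fin k → ℝ) : HasFDerivAt cumProd (fderivCumProd s) s :=
  hasFDerivAt_pi.mpr fun _ => hasFDerivAt_finsetProd

lemma det_fderivCumProd (s : Fin k → ℝ) :
    (fderivCumProd s).det = ∏ l, ∏ i ∈ Finset.Iio l, s i := by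
  set M : Matrix (Fin k) (Fin k) ℝ :=
    .of fun l i => if i ≤ l then ∏ j ∈ (Finset.Iic l).erase i, s j else 0
  have hM : LinearMap.toMatrix' (fderivCumProd s : (Fin k → ℝ) →ₗ[ℝ] (Fin k → ℝ)) = M := by
    ext l i
    simp [LinearMap.toMatrix'_apply, fderivCumProd, M, Pi.single_apply]
  have hlow : M.IsLowerTriangular := fun l i hli => by
    simp [M, not_le.mpr (show l < i from hli)]
  rw [ContinuousLinearMap.det, ← LinearMap.det_toMatrix', hM,
    Matrix.det_of_isLowerTriangular M hlow]
  simp [M, Iic_erase]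

end CumProd

section Orthant

variable {k : ℕ}

lemma measurableSet_pos_orthant : MeasurableSet {t : Fin k → ℝ | ∀ l, 0 < t l} := by
  simpa [Set.pi] using MeasurableSet.univ_pi fun (_ : Fin k) => measurableSet_Ioi (a := (0 : ℝ))

lemma prod_Iio_mul_prod_inv_cumProd {s : Fin k → ℝ} (hs : ∀ l, 0 < s l) :
    (∏ l, ∏ i ∈ Finset.Iio l, s i) * ∏ l, (cumProd s l)⁻¹ = ∏ l, (s l)⁻¹ := by
  rw [← prod_mul_distrib]
  refine prod_congr rfl fun l _ => ?_
  have hIio : (∏ i ∈ Finset.Iio l, s i) ≠ 0 := (prod_pos fun i _ => hs i).ne'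
  rw [cumProd, ← Finset.Iio_insert, Finset.prod_insert (by simp), mul_inv,
    mul_left_comm, mul_inv_cancel₀ hIio, mul_one]

theorem setIntegral_pos_orthant_cumProd (f : (Fin k → ℝ) → ℝ) :
    ∫ t in {t : Fin k → ℝ | ∀ l, 0 < t l}, f t * ∏ l, (t l)⁻¹ =
      ∫ s in {s : Fin k → ℝ | ∀ l, 0 < s l}, f (cumProd s) * ∏ l, (s l)⁻¹ := by
  conv_lhs => rw [← image_cumProd]
  rw [integral_image_eq_integral_abs_det_fderiv_smul (F := ℝ) volume
    measurableSet_pos_orthant (fun s _ => (hasFDerivAt_cumProd s).hasFDerivWithinAt)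
    injOn_cumProd (fun t => f t * ∏ l, (t l)⁻¹)]
  refine setIntegral_congr_fun measurableSet_pos_orthant fun s (hs : ∀ l, 0 < s l) => ?_
  have hdet : 0 < (fderivCumProd s).det := by
    rw [det_fderivCumProd]
    exact prod_pos fun l _ => prod_pos fun i _ => hs i
  rw [smul_eq_mul, abs_of_pos hdet, det_fderivCumProd, mul_left_comm,
    prod_Iio_mul_prod_inv_cumProd hs]

theorem setIntegral_pos_orthant_prod (f : Fin k → ℝ → ℝ) :
    ∫ s in {s : Fin k → ℝ | ∀ l, 0 < s l}, ∏ p, f p (s p) =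
      ∏ p, ∫ x in Ioi 0, f p x := by
  have hpi : {s : Fin k → ℝ | ∀ l, 0 < s l} = Set.univ.pi fun _ => Ioi 0 := by
    ext; simp
  rw [hpi, volume_pi, Measure.restrict_pi_pi, integral_fintype_prod_eq_prod]

end Orthant

lemma integral_pow_mul_exp_neg_mul_inv {e : ℕ} (he : e ≠ 0) :
    ∫ x in Ioi (0 : ℝ), x ^ e * exp (-x) * x⁻¹ = Gamma e := by
  obtain ⟨e, rfl⟩ := Nat.exists_eq_succ_of_ne_zero he
  rw [Gamma_eq_integral (by positivity)]
  refine setIntegral_congr_fun measurableSet_Ioi fun x (hx : 0 < x) => ?_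
  rw [Nat.cast_succ, add_sub_cancel_right, rpow_natCast, pow_succ]
  field_simp

section Chain

variable {m : ℕ} (hm : 2 ≤ m)

@[to_additive]
lemma prod_eq_mul_prod_idxHi {M : Type*} [CommMonoid M] (g : Fin (m - 1) → M) :
    ∏ p, g p = g (idx0 m hm) * ∏ l : Fin (m - 2), g (idxHi l) := by
  obtain ⟨k, rfl⟩ := Nat.exists_eq_add_of_le' hm
  exact Fin.prod_univ_succ g

lemma cumProd_idx0 (s : Fin (m - 1) → ℝ) : cumProd s (idx0 m hm) = s (idx0 m hm) :=
  cumProd_zero s _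

lemma cumProd_idxLast (s : Fin (m - 1) → ℝ) : cumProd s (idxLast m hm) = ∏ i, s i :=
  cumProd_of_forall_le s fun i => Fin.le_def.mpr (by simp only [idxLast]; omega)

lemma cumProd_idxHi_div_idxLo {s : Fin (m - 1) → ℝ} (hs : ∀ l, 0 < s l) (l : Fin (m - 2)) :
    cumProd s (idxHi l) / cumProd s (idxLo l) = s (idxHi l) :=
  cumProd_succ_div hs _

/-- The exponent of `s_p` coming from the numerator of the integrand, where `s_1 = t_1` and
`s_p = t_p / t_{p-1}` for `p ≥ 2` (the index `p : Fin (m - 1)` is 0-based). -/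
def chainExponent (ν : ℕ → ℕ) (a : ℕ) (p : Fin (m - 1)) : ℕ :=
  if (p : ℕ) = 0 then a else ν (p + 1)

lemma prod_pow_chainExponent (ν : ℕ → ℕ) (a : ℕ) (s : Fin (m - 1) → ℝ) :
    ∏ p, s p ^ chainExponent ν a p =
      s (idx0 m hm) ^ a * ∏ l : Fin (m - 2), s (idxHi l) ^ ν (l + 2) := by
  rw [prod_eq_mul_prod_idxHi hm]
  simp [chainExponent, idx0, idxHi]

lemma chain_integrand_cumProd (ν : ℕ → ℕ) (a d : ℕ) {s : Fin (m - 1) → ℝ}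
    (hs : ∀ l, 0 < s l) :
    cumProd s (idx0 m hm) ^ a *
        (∏ l : Fin (m - 2), (cumProd s (idxHi l) / cumProd s (idxLo l)) ^ ν (l + 2)) *
        cumProd s (idxLast m hm) ^ (d + 1) *
        exp (-cumProd s (idx0 m hm) -
          ∑ l : Fin (m - 2), cumProd s (idxHi l) / cumProd s (idxLo l)) *
        ∏ p, (s p)⁻¹ =
      ∏ p, (s p ^ (d + 1 + chainExponent ν a p) * exp (-s p) * (s p)⁻¹) := by
  simp only [cumProd_idx0, cumProd_idxLast, cumProd_idxHi_div_idxLo hs, prod_mul_distrib,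
    add_assoc, pow_add, prod_pow_chainExponent hm, ← exp_sum, sum_neg_distrib,
    sum_eq_add_sum_idxHi hm, Finset.prod_pow, ← sub_eq_add_neg]
  ring

theorem setIntegral_chain (ν : ℕ → ℕ) (a d : ℕ) :
    ∫ t in {t : Fin (m - 1) → ℝ | ∀ l, 0 < t l},
        t (idx0 m hm) ^ a * (∏ l : Fin (m - 2), (t (idxHi l) / t (idxLo l)) ^ ν (l + 2)) *
          t (idxLast m hm) ^ (d + 1) *
          exp (-t (idx0 m hm) - ∑ l : Fin (m - 2), t (idxHi l) / t (idxLo l)) *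
          ∏ l, (t l)⁻¹ =
      Gamma ((d + 1 + a : ℕ) : ℝ) *
        ∏ l : Fin (m - 2), Gamma ((d + 1 + ν (idxHi l + 1) : ℕ) : ℝ) := by
  rw [setIntegral_pos_orthant_cumProd, setIntegral_congr_fun measurableSet_pos_orthant
    fun s hs => chain_integrand_cumProd hm ν a d hs,
    setIntegral_pos_orthant_prod fun p x => x ^ (d + 1 + chainExponent ν a p) * exp (-x) * x⁻¹,
    prod_congr rfl fun p _ =>
      integral_pow_mul_exp_neg_mul_inv (e := d + 1 + chainExponent ν a p) (by omega),
    prod_eq_mul_prod_idxHi hm]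
  rfl

end Chain

lemma Gamma_add_nat_eq_eval_ascPochhammer_mul {y : ℝ} (hy : ∀ k : ℕ, y + k ≠ 0) (i : ℕ) :
    Gamma (y + i) = (ascPochhammer ℝ i).eval y * Gamma y := by
  induction i with
  | zero => simp
  | succ i ih =>
    rw [Nat.cast_succ, ← add_assoc, Gamma_add_one (hy i), ih, ascPochhammer_succ_eval]
    ring

lemma Matrix.det_vandermonde_natCast {R : Type*} [CommRing R] (n : ℕ) :
    (Matrix.vandermonde fun i : Fin n => (i : R)).det =
      ∏ j : Fin n, ((j : ℕ).factorial : R) := by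
  cases n with
  | zero => simp
  | succ n =>
    rw [Matrix.det_vandermonde_id_eq_superFactorial, ← Nat.prod_range_succ_factorial,
      Fin.prod_univ_eq_prod_range (fun j => ((j.factorial : ℕ) : R)), Nat.cast_prod]

theorem det_Gamma_add_add {x : ℝ} (hx : ∀ k : ℕ, x + k ≠ 0) (n : ℕ) :
    (Matrix.of fun i j : Fin n => Gamma (x + i + j)).det =
      ∏ i : Fin n, (Gamma (x + i) * (i : ℕ).factorial) := by
  have hrow (i j : Fin n) :
      Gamma (x + i + j) = Gamma (x + i) * (ascPochhammer ℝ j).eval ((i : ℝ) + x) := by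
    rw [Gamma_add_nat_eq_eval_ascPochhammer_mul (fun k => by simpa [add_assoc] using hx (i + k)),
      add_comm (i : ℝ), mul_comm]
  simp_rw [hrow]
  refine (Matrix.det_mul_column (fun i : Fin n => Gamma (x + i))
    (.of fun i j : Fin n => (ascPochhammer ℝ j).eval ((i : ℝ) + x))).trans ?_
  rw [← Matrix.det_eval_matrixOfPolynomials_eq_det_vandermonde _ _
      (fun j => ascPochhammer_natDegree ℝ j) (fun j => monic_ascPochhammer ℝ j),
    Matrix.det_vandermonde_add, Matrix.det_vandermonde_natCast, prod_mul_distrib]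

theorem det_a_matrix_general (n m : ℕ) (hm : 2 ≤ m) (b : ℝ)
    (ν : ℕ → ℕ) :
    (Matrix.of fun i j : Fin n =>
        b ^ (j : ℕ) *
          ∫ t in {t : Fin (m - 1) → ℝ | ∀ l, 0 < t l},
            (t (idx0 m hm)) ^ (ν 1 + (i : ℕ)) *
              (∏ l : Fin (m - 2), (t (idxHi l) / t (idxLo l)) ^ (ν ((l : ℕ) + 2))) *
              (t (idxLast m hm)) ^ ((j : ℕ) + 1) *
              Real.exp (-(t (idx0 m hm)) - ∑ l : Fin (m - 2), t (idxHi l) / t (idxLo l)) *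
              ∏ l : Fin (m - 1), (t l)⁻¹).det
      = b ^ (n * (n - 1) / 2) *
        ∏ j : Fin n,
          (Real.Gamma ((j : ℕ) + 1) *
            ∏ l : Fin (m - 1), Real.Gamma (((j : ℕ) + 1 + ν ((l : ℕ) + 1) : ℕ) : ℝ)) := by
  have hcast (i j : ℕ) : ((j + 1 + (ν 1 + i) : ℕ) : ℝ) = (ν 1 + 1 : ℝ) + i + j := by
    push_cast; ring
  have hfirst (j : ℕ) : ((j + 1 + ν ((idx0 m hm : ℕ) + 1) : ℕ) : ℝ) = (ν 1 + 1 : ℝ) + j := by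
    push_cast [idx0]; ring
  simp_rw [setIntegral_chain hm ν, hcast, mul_comm (Gamma _), ← mul_assoc]
  refine (Matrix.det_mul_row _ (.of fun i j : Fin n => Gamma ((ν 1 + 1 : ℝ) + i + j))).trans ?_
  rw [det_Gamma_add_add (fun k => by positivity), prod_mul_distrib, prod_pow_eq_pow_sum,
    Fin.sum_univ_eq_sum_range (fun i => i), sum_range_id]
  simp_rw [prod_eq_mul_prod_idxHi hm, Gamma_nat_eq_factorial, hfirst, prod_mul_distrib]
  ring

/-- Fix `n ≥ 1`, `m ≥ 2`, `b > 0` and nonnegative integers `ν_1,…,ν_{m−1}`.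
For the matrix with entries
`a_{i,j}(b) = b^{j−1} ∫_{(0,∞)^{m−1}} t_1^{ν_1+i−1} ∏_{l=2}^{m−1}(t_l/t_{l−1})^{ν_l}
  t_{m−1}^j exp(−t_1 − ∑_{l=2}^{m−1} t_l/t_{l−1}) (dt_1/t_1)⋯(dt_{m−1}/t_{m−1})`
one has `det[a_{i,j}(b)] = b^{n(n−1)/2} ∏_{j=1}^n (Γ(j) ∏_{l=1}^{m−1} Γ(j+ν_l))`.
Here `i,j : Fin n` are the 0-based versions of the 1-based indices. -/
theorem det_a_matrix (n m : ℕ) (hn : 1 ≤ n) (hm : 2 ≤ m) (b : ℝ) (hb : 0 < b)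
    (ν : ℕ → ℕ) :
    (Matrix.of fun i j : Fin n =>
        b ^ (j : ℕ) *
          ∫ t in {t : Fin (m - 1) → ℝ | ∀ l, 0 < t l},
            (t (idx0 m hm)) ^ (ν 1 + (i : ℕ)) *
              (∏ l : Fin (m - 2), (t (idxHi l) / t (idxLo l)) ^ (ν ((l : ℕ) + 2))) *
              (t (idxLast m hm)) ^ ((j : ℕ) + 1) *
              Real.exp (-(t (idx0 m hm)) - ∑ l : Fin (m - 2), t (idxHi l) / t (idxLo l)) *
              ∏ l : Fin (m - 1), (t l)⁻¹).det
      = b ^ (n * (n - 1) / 2) *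
        ∏ j : Fin n,
          (Real.Gamma ((j : ℕ) + 1) *
            ∏ l : Fin (m - 1), Real.Gamma (((j : ℕ) + 1 + ν ((l : ℕ) + 1) : ℕ) : ℝ)) :=
  det_a_matrix_general n m hm b ν
end

section
/- Fix integers n ≥ 1, m ≥ 2, a real b > 0 and integers ν_1,…,ν_{m−1} ≥ 0. For i,j ∈ {1,…,n} define a_{i,j} = b^{j−1} Γ(i+j−1+ν_1) ∏_{l=2}^{m−1} Γ(j+ν_l), and define c_{j,k} = (b^{j−1} ∏_{l=2}^{m−1} Γ(j+ν_l))^{−1} · ∑_{p=0}^{n−1} [Γ(ν_1+p+1) / (Γ(ν_1+1)² p!)] · [(−p)_{j−1} (−p)_{k−1} / ((ν_1+1)_{j−1} (ν_1+1)_{k−1} (j−1)! (k−1)!)]. Then ∑_{j=1}^n a_{i,j} c_{j,k} = δ_{i,k} for all i,k ∈ {1,…,n}; that is, the matrix (c_{j,k})_{j,k=1}^n is the inverse of (a_{i,j})_{i,j=1}^n. -/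
open Finset

/-- The Pochhammer symbol `(a)_k = a(a+1)⋯(a+k−1)`, with `(a)_0 = 1`. -/
noncomputable def poch (a : ℝ) (k : ℕ) : ℝ := ∏ i ∈ Finset.range k, (a + i)

/-!
After cancelling the factors `b^{j-1} ∏ Γ(j+ν_l)`, which occur in `a_{ij}` and inversely in
`c_{jk}`, only the Hankel matrix `((ν+i+j)!)` remains against the factorial–binomial form of `c`
(indices shifted to start at `0`, `ν = ν_1`). Since `(ν+i+j)!/(ν+j)! = i! C(j+ν+i, i)`, the sum
over `j` is a `p`-th forward difference of `x ↦ C(x, i)`, namely `(-1)^p C(i,p) p! (ν+i)!/(ν+p)!`;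
what is left of the sum over `p` is binomial inversion, `∑_p (-1)^(p+k) C(i,p) C(p,k) = δ_{ik}`.
-/

open Nat

theorem neg_one_pow_eq_mul_neg_one_pow_sub {R : Type*} [Monoid R] [HasDistribNeg R] {p i : ℕ}
    (h : p ≤ i) : (-1 : R) ^ p = (-1) ^ i * (-1) ^ (i - p) := by
  rw [← pow_mul_pow_sub (-1 : R) h, mul_assoc, ← pow_add, ← two_mul, pow_mul, neg_one_sq, one_pow,
    mul_one]

theorem fwdDiff_iter_choose_apply (p i r : ℕ) :
    (fwdDiff 1)^[p] (fun x ↦ (x.choose i : ℤ)) r = if p ≤ i then (r.choose (i - p) : ℤ) else 0 := by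
  split_ifs with h
  · obtain ⟨d, rfl⟩ := Nat.exists_eq_add_of_le h
    rw [fwdDiff_iter_choose, Nat.add_sub_cancel_left]
  · obtain ⟨d, rfl⟩ := Nat.exists_eq_add_of_lt (not_le.1 h)
    have h_const : (fwdDiff 1)^[i] (fun x ↦ (x.choose i : ℤ)) = fun _ ↦ 1 := by
      simpa using fwdDiff_iter_choose 0 i
    rw [show i + d + 1 = (d + 1) + i by omega, Function.iterate_add_apply, h_const,
      Function.iterate_succ_apply, fwdDiff_const, Function.iterate_fixed (fwdDiff_const 1 0)]

theorem sum_range_neg_one_pow_mul_choose_mul_choose_add {p N : ℕ} (hp : p < N) (i r : ℕ) :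
    ∑ j ∈ range N, (-1 : ℤ) ^ j * p.choose j * (j + r).choose i =
      (-1) ^ p * if p ≤ i then (r.choose (i - p) : ℤ) else 0 := by
  have h := fwdDiff_iter_comp_add 1 (fun x ↦ (x.choose i : ℤ)) r p 0
  rw [fwdDiff_iter_eq_sum_shift, zero_add, fwdDiff_iter_choose_apply] at h
  simp only [zero_add, smul_eq_mul, mul_one] at h
  rw [← h, eventually_constant_sum (fun j hj ↦ by simp [Nat.choose_eq_zero_of_lt hj]) hp, mul_sum]
  refine sum_congr rfl fun j hj ↦ ?_
  rw [neg_one_pow_eq_mul_neg_one_pow_sub (mem_range_succ_iff.1 hj)]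
  ring

theorem sum_range_neg_one_pow_mul_choose_mul_choose {i N : ℕ} (hi : i < N) (k : ℕ) :
    ∑ p ∈ range N, (-1 : ℤ) ^ (p + k) * i.choose p * p.choose k = if i = k then 1 else 0 := by
  have h := fwdDiff_iter_eq_sum_shift 1 (fun x ↦ (x.choose k : ℤ)) i 0
  rw [fwdDiff_iter_choose_zero] at h
  simp only [zero_add, smul_eq_mul, mul_one] at h
  calc ∑ p ∈ range N, (-1 : ℤ) ^ (p + k) * i.choose p * p.choose k
      = (-1) ^ (i + k) * ∑ p ∈ range (i + 1), (-1 : ℤ) ^ (i - p) * i.choose p * p.choose k := by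
        rw [eventually_constant_sum (fun p hp ↦ by simp [Nat.choose_eq_zero_of_lt hp]) hi, mul_sum]
        refine sum_congr rfl fun p hp ↦ ?_
        rw [pow_add, neg_one_pow_eq_mul_neg_one_pow_sub (mem_range_succ_iff.1 hp)]
        ring
    _ = if i = k then 1 else 0 := by
        rw [← h]
        split_ifs with hik
        · simp [hik, ← two_mul, pow_mul]
        · simp

theorem factorial_mul_choose_mul_factorial (ν p d : ℕ) :
    (p + d)! * (ν + p + d).choose d * (ν + p)! = (p + d).choose p * p ! * (ν + p + d)! := by
  rw [← Nat.add_choose_mul_factorial_mul_factorial p d,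
    ← Nat.add_choose_mul_factorial_mul_factorial (ν + p) d, Nat.choose_symm_add]
  ring

section FactorialRatios

variable {K : Type*} [Field K] [CharZero K]

theorem factorial_div_factorial_eq_factorial_mul_choose (ν i j : ℕ) :
    ((ν + i + j)! : K) / (ν + j)! = i ! * (j + (ν + i)).choose i := by
  rw [div_eq_iff (Nat.cast_ne_zero.2 (factorial_ne_zero _)), show j + (ν + i) = ν + j + i by ring,
    show ν + i + j = ν + j + i by ring, ← Nat.add_choose_mul_factorial_mul_factorial (ν + j) i]
  push_cast
  ring

theorem sum_range_neg_one_pow_mul_choose_mul_factorial_div {p N : ℕ} (hp : p < N) (ν i : ℕ) :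
    ∑ j ∈ range N, (-1 : K) ^ j * p.choose j * ((ν + i + j)! / (ν + j)!) =
      (-1) ^ p * i.choose p * (p ! * (ν + i)! / (ν + p)!) := by
  have h := congrArg (Int.cast : ℤ → K) (sum_range_neg_one_pow_mul_choose_mul_choose_add hp i (ν + i))
  push_cast at h
  calc ∑ j ∈ range N, (-1 : K) ^ j * p.choose j * ((ν + i + j)! / (ν + j)!)
      = i ! * ∑ j ∈ range N, (-1 : K) ^ j * p.choose j * (j + (ν + i)).choose i := by
        simp_rw [factorial_div_factorial_eq_factorial_mul_choose, mul_sum]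
        exact sum_congr rfl fun j _ ↦ by ring
    _ = (-1) ^ p * (i ! * if p ≤ i then ((ν + i).choose (i - p) : K) else 0) := by
        rw [h]
        ring
    _ = (-1) ^ p * i.choose p * (p ! * (ν + i)! / (ν + p)!) := by
        rw [mul_assoc]
        congr 1
        split_ifs with hpi
        · obtain ⟨d, rfl⟩ := Nat.exists_eq_add_of_le hpi
          rw [Nat.add_sub_cancel_left, ← add_assoc, ← mul_div_assoc, ← mul_assoc,
            eq_div_iff (Nat.cast_ne_zero.2 (factorial_ne_zero _))]
          exact_mod_cast factorial_mul_choose_mul_factorial ν p d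
        · simp [Nat.choose_eq_zero_of_lt (not_le.1 hpi)]

theorem sum_factorial_mul_sum_choose_mul_choose {n i : ℕ} (hi : i < n) (ν k : ℕ) :
    ∑ j ∈ range n, ((ν + i + j)! : K) * ∑ p ∈ range n,
        ((ν + p)! : K) / p ! * ((-1) ^ (j + k) * p.choose j * p.choose k) / ((ν + j)! * (ν + k)!) =
      if i = k then 1 else 0 := by
  have hδ := congrArg (Int.cast : ℤ → K) (sum_range_neg_one_pow_mul_choose_mul_choose hi k)
  push_cast at hδ
  calc _ = ∑ p ∈ range n, (-1) ^ k * p.choose k * ((ν + p)! / (p ! * (ν + k)!)) *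
        ∑ j ∈ range n, (-1 : K) ^ j * p.choose j * ((ν + i + j)! / (ν + j)!) := by
        simp_rw [mul_sum]
        rw [sum_comm]
        refine sum_congr rfl fun p _ ↦ sum_congr rfl fun j _ ↦ ?_
        field_simp [Nat.cast_ne_zero, factorial_ne_zero]
        ring
    _ = (ν + i)! / (ν + k)! * ∑ p ∈ range n, (-1 : K) ^ (p + k) * i.choose p * p.choose k := by
        rw [mul_sum]
        refine sum_congr rfl fun p hp ↦ ?_
        rw [sum_range_neg_one_pow_mul_choose_mul_factorial_div (mem_range.1 hp)]
        field_simp [Nat.cast_ne_zero, factorial_ne_zero]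
        ring
    _ = if i = k then 1 else 0 := by
        rw [hδ]
        split_ifs with hik
        · simp [hik, factorial_ne_zero]
        · simp

end FactorialRatios

theorem poch_natCast_add_one (ν j : ℕ) : poch (ν + 1) j = (ν + 1).ascFactorial j := by
  simp [poch, Nat.ascFactorial_eq_prod_range, add_right_comm]

theorem poch_neg_natCast (p j : ℕ) : poch (-p) j = (-1) ^ j * p.descFactorial j := by
  rw [poch, ← descPochhammer_eval_eq_descFactorial ℝ, descPochhammer_eval_eq_prod_range]
  nth_rw 2 [← card_range j]
  rw [← prod_neg]
  exact prod_congr rfl fun i _ ↦ by ring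

theorem gamma_div_mul_poch_eq (ν p j k : ℕ) :
    Real.Gamma ((ν : ℝ) + p + 1) / (Real.Gamma ((ν : ℝ) + 1) ^ 2 * p !) *
        (poch (-p) j * poch (-p) k / (poch (ν + 1) j * poch (ν + 1) k * j ! * k !)) =
      (ν + p)! / p ! * ((-1) ^ (j + k) * p.choose j * p.choose k) / ((ν + j)! * (ν + k)!) := by
  rw [show (ν : ℝ) + p + 1 = (ν + p : ℕ) + 1 by push_cast; ring, Real.Gamma_nat_eq_factorial,
    Real.Gamma_nat_eq_factorial, poch_neg_natCast, poch_neg_natCast, poch_natCast_add_one,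
    poch_natCast_add_one, ← factorial_mul_ascFactorial ν j, ← factorial_mul_ascFactorial ν k,
    descFactorial_eq_factorial_mul_choose, descFactorial_eq_factorial_mul_choose]
  push_cast
  field_simp
  ring

theorem matrix_a_inverse_general (n m : ℕ) (b : ℝ) (hb : 0 < b)
    (ν : ℕ → ℕ) (i k : Fin n) :
    ∑ j : Fin n,
        (b ^ (j : ℕ) * Real.Gamma (((i : ℕ) + (j : ℕ) + 1 + ν 1 : ℕ) : ℝ) *
          ∏ l : Fin (m - 2), Real.Gamma (((j : ℕ) + 1 + ν ((l : ℕ) + 2) : ℕ) : ℝ)) *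
        ((b ^ (j : ℕ) * ∏ l : Fin (m - 2),
            Real.Gamma (((j : ℕ) + 1 + ν ((l : ℕ) + 2) : ℕ) : ℝ))⁻¹ *
          ∑ p ∈ Finset.range n,
            Real.Gamma ((ν 1 : ℝ) + p + 1) /
                (Real.Gamma ((ν 1 : ℝ) + 1) ^ 2 * (Nat.factorial p : ℝ)) *
              (poch (-(p : ℝ)) (j : ℕ) * poch (-(p : ℝ)) (k : ℕ) /
                (poch ((ν 1 : ℝ) + 1) (j : ℕ) * poch ((ν 1 : ℝ) + 1) (k : ℕ) *
                  (Nat.factorial (j : ℕ) : ℝ) * (Nat.factorial (k : ℕ) : ℝ))))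
      = if i = k then 1 else 0 := by
  have hinv := (sum_range _).symm.trans
    (sum_factorial_mul_sum_choose_mul_choose (K := ℝ) i.isLt (ν 1) k)
  simp only [Fin.val_inj] at hinv
  rw [← hinv]
  refine sum_congr rfl fun j _ ↦ ?_
  have hweight : b ^ (j : ℕ) * ∏ l : Fin (m - 2), Real.Gamma (((j : ℕ) + 1 + ν ((l : ℕ) + 2) : ℕ) : ℝ)
      ≠ 0 :=
    (mul_pos (pow_pos hb _) (prod_pos fun l _ ↦ Real.Gamma_pos_of_pos (by positivity))).ne'
  rw [show ∀ x g y s : ℝ, x * g * y * ((x * y)⁻¹ * s) = x * y * (x * y)⁻¹ * (g * s) from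
      fun _ _ _ _ ↦ by ring, mul_inv_cancel₀ hweight, one_mul,
    show (i : ℕ) + j + 1 + ν 1 = ν 1 + i + j + 1 by ring, Nat.cast_succ, Real.Gamma_nat_eq_factorial]
  simp only [gamma_div_mul_poch_eq]

/-- Fix `n ≥ 1`, `m ≥ 2`, `b > 0` and nonnegative integers `ν_1,…,ν_{m−1}`.
With `a_{i,j} = b^{j−1} Γ(i+j−1+ν_1) ∏_{l=2}^{m−1} Γ(j+ν_l)` and
`c_{j,k} = (b^{j−1} ∏_{l=2}^{m−1} Γ(j+ν_l))⁻¹ ∑_{p=0}^{n−1}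
  [Γ(ν_1+p+1)/(Γ(ν_1+1)² p!)] (−p)_{j−1}(−p)_{k−1}/((ν_1+1)_{j−1}(ν_1+1)_{k−1}(j−1)!(k−1)!)`,
(indices `i,j,k ∈ {1,…,n}`), the matrix `c` is the inverse of the matrix `a`:
`∑_{j=1}^n a_{i,j} c_{j,k} = δ_{i,k}`.  Here `i,j,k : Fin n` are the 0-based versions
of the 1-based indices in the statement. -/
theorem matrix_a_inverse (n m : ℕ) (hn : 1 ≤ n) (hm : 2 ≤ m) (b : ℝ) (hb : 0 < b)
    (ν : ℕ → ℕ) (i k : Fin n) :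
    ∑ j : Fin n,
        (b ^ (j : ℕ) * Real.Gamma (((i : ℕ) + (j : ℕ) + 1 + ν 1 : ℕ) : ℝ) *
          ∏ l : Fin (m - 2), Real.Gamma (((j : ℕ) + 1 + ν ((l : ℕ) + 2) : ℕ) : ℝ)) *
        ((b ^ (j : ℕ) * ∏ l : Fin (m - 2),
            Real.Gamma (((j : ℕ) + 1 + ν ((l : ℕ) + 2) : ℕ) : ℝ))⁻¹ *
          ∑ p ∈ Finset.range n,
            Real.Gamma ((ν 1 : ℝ) + p + 1) /
                (Real.Gamma ((ν 1 : ℝ) + 1) ^ 2 * (Nat.factorial p : ℝ)) *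
              (poch (-(p : ℝ)) (j : ℕ) * poch (-(p : ℝ)) (k : ℕ) /
                (poch ((ν 1 : ℝ) + 1) (j : ℕ) * poch ((ν 1 : ℝ) + 1) (k : ℕ) *
                  (Nat.factorial (j : ℕ) : ℝ) * (Nat.factorial (k : ℕ) : ℝ))))
      = if i = k then 1 else 0 :=
  matrix_a_inverse_general n m b hb ν i k
end

section
/- Let (X, μ) be a measure space, n ≥ 1 an integer, and φ_1,…,φ_n, ψ_1,…,ψ_n : X → ℂ measurable functions such that φ_i ψ_j is μ-integrable for all i,j and the left-hand side below converges absolutely. Then ∫_{X^n} det[φ_i(y_j)]_{i,j=1}^n · det[ψ_i(y_j)]_{i,j=1}^n dμ(y_1)⋯dμ(y_n) = n! · det[∫_X φ_i(y) ψ_j(y) dμ(y)]_{i,j=1}^n. -/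
open MeasureTheory
open Equiv Finset Matrix

/-!
Expand both determinants with the Leibniz formula. Each of the `(n!)²` terms is a product of
functions of one variable `y_j` each, so by Fubini it integrates to `∏ⱼ A (σ j) (τ j)`, where
`A i k = ∫ φ_i ψ_k`. For fixed `σ` the sum over `τ` is the Leibniz expansion of `A` with its rows
permuted by `σ`, i.e. `sign σ · det A`; together with the outer `sign σ` every `σ` contributes
exactly `det A`.
-/

section Algebra

variable {ι R : Type*} [Fintype ι] [DecidableEq ι] [CommRing R]

theorem Matrix.det_mul_det_eq_sum_sum (M N : Matrix ι ι R) :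
    M.det * N.det = ∑ σ : Perm ι, ∑ τ : Perm ι,
      (Perm.sign σ : R) * Perm.sign τ * ∏ j, M (σ j) j * N (τ j) j := by
  rw [det_apply', det_apply', sum_mul_sum]
  refine sum_congr rfl fun σ _ => sum_congr rfl fun τ _ => ?_
  rw [prod_mul_distrib]
  ring

theorem Matrix.sum_sign_mul_prod_permute (A : Matrix ι ι R) (σ : Perm ι) :
    ∑ τ : Perm ι, (Perm.sign τ : R) * ∏ j, A (σ j) (τ j) = Perm.sign σ * A.det := by
  rw [← det_permute, ← det_transpose, det_apply']
  rfl

theorem Int.cast_units_mul_self (u : ℤˣ) : (u : R) * u = 1 := by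
  rw [← Int.cast_mul, ← Units.val_mul, Int.units_mul_self, Units.val_one, Int.cast_one]

theorem Matrix.sum_sum_sign_mul_sign_mul_prod (A : Matrix ι ι R) :
    ∑ σ : Perm ι, ∑ τ : Perm ι, (Perm.sign σ : R) * Perm.sign τ * ∏ j, A (σ j) (τ j)
      = Fintype.card (Perm ι) * A.det := by
  simp_rw [mul_assoc, ← mul_sum, sum_sign_mul_prod_permute, ← mul_assoc,
    Int.cast_units_mul_self, one_mul, sum_const, card_univ, nsmul_eq_mul]

end Algebra

theorem MeasureTheory.integral_det_mul_det {ι X 𝕜 : Type*} [Fintype ι] [DecidableEq ι] [RCLike 𝕜]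
    [MeasurableSpace X] (μ : Measure X) [SigmaFinite μ] (φ ψ : ι → X → 𝕜)
    (hint : ∀ i j, Integrable (fun y => φ i y * ψ j y) μ) :
    ∫ y : ι → X, (Matrix.of fun i j => φ i (y j)).det * (Matrix.of fun i j => ψ i (y j)).det
        ∂(Measure.pi fun _ => μ)
      = Fintype.card (Perm ι) * (Matrix.of fun i j => ∫ y, φ i y * ψ j y ∂μ).det := by
  have hterm : ∀ σ τ : Perm ι,
      Integrable (fun y : ι → X => ∏ j, φ (σ j) (y j) * ψ (τ j) (y j)) (Measure.pi fun _ => μ) :=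
    fun σ τ => Integrable.fintype_prod (f := fun j x => φ (σ j) x * ψ (τ j) x)
      fun j => hint (σ j) (τ j)
  simp_rw [det_mul_det_eq_sum_sum, of_apply]
  rw [← sum_sum_sign_mul_sign_mul_prod, integral_finsetSum _ fun σ _ =>
    integrable_finsetSum _ fun τ _ => (hterm σ τ).const_mul _]
  refine sum_congr rfl fun σ _ => ?_
  rw [integral_finsetSum _ fun τ _ => (hterm σ τ).const_mul _]
  refine sum_congr rfl fun τ _ => ?_
  rw [integral_const_mul,
    integral_fintype_prod_eq_prod (f := fun j x => φ (σ j) x * ψ (τ j) x)]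
  rfl

theorem andreief_identity_general {X : Type*} [MeasurableSpace X] (μ : Measure X) [SigmaFinite μ]
    (n : ℕ) (φ ψ : Fin n → X → ℂ)
    (hint : ∀ i j, Integrable (fun y => φ i y * ψ j y) μ) :
    (∫ y : Fin n → X,
        (Matrix.of fun i j : Fin n => φ i (y j)).det *
          (Matrix.of fun i j : Fin n => ψ i (y j)).det ∂(Measure.pi fun _ => μ))
      = (n.factorial : ℂ) *
        (Matrix.of fun i j : Fin n => ∫ y, φ i y * ψ j y ∂μ).det := by
  rw [integral_det_mul_det μ φ ψ hint, Fintype.card_perm, Fintype.card_fin]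

/-- The Andréief integral identity: for measurable `φ_1,…,φ_n, ψ_1,…,ψ_n : X → ℂ`
such that each `φ_i ψ_j` is integrable and the left-hand side converges absolutely,
`∫_{X^n} det[φ_i(y_j)] det[ψ_i(y_j)] dμⁿ = n! det[∫ φ_i ψ_j dμ]`. -/
theorem andreief_identity {X : Type*} [MeasurableSpace X] (μ : Measure X) [SigmaFinite μ]
    (n : ℕ) (hn : 1 ≤ n) (φ ψ : Fin n → X → ℂ)
    (hφ : ∀ i, Measurable (φ i)) (hψ : ∀ i, Measurable (ψ i))
    (hint : ∀ i j, Integrable (fun y => φ i y * ψ j y) μ)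
    (hL : Integrable
      (fun y : Fin n → X =>
        (Matrix.of fun i j : Fin n => φ i (y j)).det *
          (Matrix.of fun i j : Fin n => ψ i (y j)).det)
      (Measure.pi fun _ => μ)) :
    (∫ y : Fin n → X,
        (Matrix.of fun i j : Fin n => φ i (y j)).det *
          (Matrix.of fun i j : Fin n => ψ i (y j)).det ∂(Measure.pi fun _ => μ))
      = (n.factorial : ℂ) *
        (Matrix.of fun i j : Fin n => ∫ y, φ i y * ψ j y ∂μ).det :=
  andreief_identity_general μ n φ ψ hint
end

section
/- For all reals x > 0, b > 0 and every integer j ≥ 1, ∫_0^∞ e^{−y/x} y^{(j−1)/2} I_{j−1}(2b y^{1/2}) dy = x^j b^{j−1} e^{b² x}. -/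
/-! Expanding `I_{j-1}` in its power series turns the integrand into a series of Gamma integrands
`e^{-y/x} y^n`; these integrate to `n! x^(n+1)`, the factorials cancel, and what is left is the
exponential series of `b² x`. Exchanging sum and integral is justified by absolute convergence:
the integrals of the absolute values of the terms are those of the series for `|b|`. -/

open MeasureTheory Real Set

/-- The modified Bessel function of the first kind of integer order `k`,
`I_k(z) = ∑_{m=0}^∞ (z/2)^(2m+k)/(m!(m+k)!)`. -/
noncomputable def besselI (k : ℕ) (z : ℝ) : ℝ :=
  ∑' m : ℕ, (z / 2) ^ (2 * m + k) / ((Nat.factorial m : ℝ) * (Nat.factorial (m + k) : ℝ))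

open scoped Nat

-- the integrand of `integral_rpow_mul_exp_neg_mul_Ioi` with `a = n + 1`, `r = x⁻¹`
lemma exp_neg_div_mul_pow_eq_rpow_mul_exp (x : ℝ) (n : ℕ) (y : ℝ) :
    exp (-(y / x)) * y ^ n = y ^ ((n + 1 : ℝ) - 1) * exp (-(x⁻¹ * y)) := by
  rw [add_sub_cancel_right, rpow_natCast, mul_comm, inv_mul_eq_div]

lemma integrableOn_exp_neg_div_mul_pow {x : ℝ} (hx : 0 < x) (n : ℕ) :
    IntegrableOn (fun y ↦ exp (-(y / x)) * y ^ n) (Ioi 0) := by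
  simp_rw [exp_neg_div_mul_pow_eq_rpow_mul_exp x, add_sub_cancel_right]
  simpa [rpow_one] using integrableOn_rpow_mul_exp_neg_mul_rpow (p := 1) (s := n)
    (by linarith [n.cast_nonneg (α := ℝ)]) one_pos (inv_pos.mpr hx)

lemma integral_exp_neg_div_mul_pow {x : ℝ} (hx : 0 < x) (n : ℕ) :
    ∫ y in Ioi 0, exp (-(y / x)) * y ^ n = n ! * x ^ (n + 1) := by
  simp_rw [exp_neg_div_mul_pow_eq_rpow_mul_exp x]
  rw [integral_rpow_mul_exp_neg_mul_Ioi (by positivity) (inv_pos.mpr hx), one_div, inv_inv,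
    Gamma_nat_eq_factorial, ← Nat.cast_succ, rpow_natCast, mul_comm]

lemma sqrt_pow_mul_besselI_two_mul_sqrt (k : ℕ) (b : ℝ) {y : ℝ} (hy : 0 ≤ y) :
    √y ^ k * besselI k (2 * b * √y)
      = ∑' m : ℕ, b ^ (2 * m + k) / (m ! * (m + k)!) * y ^ (m + k) := by
  rw [besselI, ← tsum_mul_left]
  congr 1 with m
  have hsqrt : √y ^ (2 * (m + k)) = y ^ (m + k) := by rw [pow_mul, sq_sqrt hy]
  rw [← hsqrt]
  ring

lemma integral_exp_neg_div_mul_besselI_term {x : ℝ} (hx : 0 < x) (k m : ℕ) (b : ℝ) :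
    ∫ y in Ioi 0, exp (-(y / x)) * (b ^ (2 * m + k) / (m ! * (m + k)!) * y ^ (m + k))
      = b ^ k * x ^ (k + 1) * ((b ^ 2 * x) ^ m / m !) := by
  simp_rw [mul_left_comm (exp _), integral_const_mul, integral_exp_neg_div_mul_pow hx]
  field_simp
  ring

theorem integral_exp_mul_besselI_general (x b : ℝ) (hx : 0 < x) (j : ℕ) (hj : 1 ≤ j) :
    (∫ y in Ioi (0:ℝ),
        Real.exp (-(y / x)) * (Real.sqrt y) ^ (j - 1) * besselI (j - 1) (2 * b * Real.sqrt y))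
      = x ^ j * b ^ (j - 1) * Real.exp (b ^ 2 * x) := by
  obtain ⟨k, rfl⟩ : ∃ k, j = k + 1 := ⟨j - 1, by omega⟩
  rw [Nat.add_sub_cancel]
  set F : ℝ → ℕ → ℝ → ℝ :=
    fun c m y ↦ exp (-(y / x)) * (c ^ (2 * m + k) / (m ! * (m + k)!) * y ^ (m + k)) with hF
  have hseries : ∀ y ∈ Ioi (0 : ℝ),
      exp (-(y / x)) * √y ^ k * besselI k (2 * b * √y) = ∑' m, F b m y := fun y hy ↦ by
    rw [mul_assoc, sqrt_pow_mul_besselI_two_mul_sqrt k b hy.le, ← tsum_mul_left]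
  have hint (m : ℕ) : IntegrableOn (F b m) (Ioi 0) := by
    simp only [hF, mul_left_comm (exp _)]
    exact (integrableOn_exp_neg_div_mul_pow hx (m + k)).const_mul _
  have hnorm (m : ℕ) : ∫ y in Ioi 0, ‖F b m y‖ = ∫ y in Ioi 0, F |b| m y := by
    refine setIntegral_congr_fun measurableSet_Ioi fun y hy ↦ ?_
    simp only [hF, norm_mul, norm_div, norm_pow, norm_eq_abs, abs_exp, Nat.abs_cast,
      abs_of_pos (mem_Ioi.mp hy)]
  have hsummable : Summable fun m ↦ ∫ y in Ioi 0, ‖F b m y‖ := by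
    simp_rw [hnorm, hF, integral_exp_neg_div_mul_besselI_term hx]
    exact (summable_pow_div_factorial _).mul_left _
  rw [setIntegral_congr_fun measurableSet_Ioi hseries,
    ← integral_tsum_of_summable_integral_norm hint hsummable]
  simp_rw [hF, integral_exp_neg_div_mul_besselI_term hx, tsum_mul_left,
    (NormedSpace.expSeries_div_hasSum_exp (b ^ 2 * x)).tsum_eq, ← exp_eq_exp_ℝ]
  ring

/-- For all reals `x > 0`, `b > 0` and every integer `j ≥ 1`,
`∫_0^∞ e^(−y/x) y^((j−1)/2) I_(j−1)(2b√y) dy = x^j b^(j−1) e^(b²x)`. -/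
theorem integral_exp_mul_besselI (x b : ℝ) (hx : 0 < x) (hb : 0 < b) (j : ℕ) (hj : 1 ≤ j) :
    (∫ y in Ioi (0:ℝ),
        Real.exp (-(y / x)) * (Real.sqrt y) ^ (j - 1) * besselI (j - 1) (2 * b * Real.sqrt y))
      = x ^ j * b ^ (j - 1) * Real.exp (b ^ 2 * x) :=
  integral_exp_mul_besselI_general x b hx j hj
end

section
/- Let n ≥ 1 be an integer, b > 0 a real, and x_1,…,x_n > 0 pairwise distinct reals. Then ∫_{(0,∞)^n} det[e^{−y_j/x_k}]_{j,k=1}^n · det[y_j^{(k−1)/2} I_{k−1}(2b y_j^{1/2})]_{j,k=1}^n dy_1⋯dy_n = n! · b^{n(n−1)/2} · (∏_{k=1}^n x_k e^{b² x_k}) · Δ_n(x). -/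
open MeasureTheory Real Set

/-!
By Andréief's identity, the `n`-fold integral of a product of two determinants is `n!` times the
determinant of the matrix of one-dimensional integrals
`∫₀^∞ e^(-t/x_k) t^(l/2) I_l(2b√t) dt`. Integrating the Bessel series term by term against the
Gamma integral `∫₀^∞ t^p e^(-t/x) dt = p! x^(p+1)` gives `b^l x_k^(l+1) e^(b² x_k)`, so that matrix
is the Vandermonde matrix of the `x_k` with its rows scaled by `x_k e^(b² x_k)` and its columns
by `b^l`.
-/

open Filter Finset Matrix Equiv Nat

theorem MeasureTheory.integrable_tsum_of_summable_integral_norm {α E : Type*} [MeasurableSpace α]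
    {μ : Measure α} [NormedAddCommGroup E] [CompleteSpace E] {F : ℕ → α → E}
    (hF_int : ∀ i, Integrable (F i) μ) (hF_sum : Summable fun i ↦ ∫ a, ‖F i a‖ ∂μ) :
    Integrable (fun a ↦ ∑' i, F i a) μ := by
  have hF_meas i : AEMeasurable (fun a ↦ ‖F i a‖ₑ) μ := (hF_int i).aestronglyMeasurable.enorm
  have hlintegral : ∫⁻ a, ∑' i, ‖F i a‖ₑ ∂μ ≠ ⊤ := by
    rw [lintegral_tsum hF_meas]
    simp_rw [← ofReal_integral_norm_eq_lintegral_enorm (hF_int _)]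
    rw [← ENNReal.ofReal_tsum_of_nonneg (fun i ↦ integral_nonneg fun a ↦ norm_nonneg _) hF_sum]
    exact ENNReal.ofReal_ne_top
  have hsummable : ∀ᵐ a ∂μ, Summable fun i ↦ F i a := by
    filter_upwards [ae_lt_top' (AEMeasurable.tsum hF_meas) hlintegral] with a ha
    exact (tsum_enorm_ne_top_iff_summable_norm.1 ha.ne).of_norm
  refine ⟨aestronglyMeasurable_of_tendsto_ae atTop
    (fun N ↦ Finset.aestronglyMeasurable_fun_sum _ fun i _ ↦ (hF_int i).aestronglyMeasurable)
    (hsummable.mono fun a ha ↦ ha.hasSum.tendsto_sum_nat), ?_⟩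
  exact (lintegral_mono fun a ↦ enorm_tsum_le_tsum_enorm).trans_lt hlintegral.lt_top

theorem Matrix.det_of_apply_eq_sum_sign_mul_prod {ι R α : Type*} [Fintype ι] [DecidableEq ι]
    [CommRing R] (f : ι → α → R) (y : ι → α) :
    (Matrix.of fun j k ↦ f k (y j)).det = ∑ σ : Perm ι, (Perm.sign σ : R) * ∏ j, f (σ j) (y j) := by
  rw [← det_transpose, det_apply']
  rfl

theorem Matrix.sum_perm_sum_perm_sign_mul_prod {ι R : Type*} [Fintype ι] [DecidableEq ι]
    [CommRing R] (M : Matrix ι ι R) :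
    ∑ σ : Perm ι, ∑ τ : Perm ι, (Perm.sign σ : R) * Perm.sign τ * ∏ j, M (σ j) (τ j) =
      ((Fintype.card ι)! : R) * M.det := by
  have hrow (σ : Perm ι) :
      ∑ τ : Perm ι, (Perm.sign τ : R) * ∏ j, M (σ j) (τ j) = Perm.sign σ * M.det := by
    rw [← det_permute, ← det_transpose, det_apply']
    rfl
  have hsign (σ : Perm ι) : (Perm.sign σ : R) * Perm.sign σ = 1 := by
    rw [← Int.cast_mul, ← Units.val_mul, Int.units_mul_self, Units.val_one, Int.cast_one]
  simp_rw [mul_assoc, ← Finset.mul_sum, hrow, ← mul_assoc, hsign, one_mul, Finset.sum_const,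
    Finset.card_univ, Fintype.card_perm, nsmul_eq_mul]

theorem MeasureTheory.integral_det_mul_det_pi {ι α 𝕜 : Type*} [Fintype ι] [DecidableEq ι]
    [MeasurableSpace α] [RCLike 𝕜] (μ : Measure α) [SigmaFinite μ] (f g : ι → α → 𝕜)
    (hfg : ∀ k l, Integrable (fun t ↦ f k t * g l t) μ) :
    ∫ y, (Matrix.of fun j k ↦ f k (y j)).det * (Matrix.of fun j l ↦ g l (y j)).det
        ∂(Measure.pi fun _ ↦ μ) =
      ((Fintype.card ι)! : 𝕜) * (Matrix.of fun k l ↦ ∫ t, f k t * g l t ∂μ).det := by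
  have hexpand (y : ι → α) :
      (Matrix.of fun j k ↦ f k (y j)).det * (Matrix.of fun j l ↦ g l (y j)).det =
        ∑ σ : Perm ι, ∑ τ : Perm ι,
          (Perm.sign σ : 𝕜) * Perm.sign τ * ∏ j, f (σ j) (y j) * g (τ j) (y j) := by
    simp_rw [det_of_apply_eq_sum_sign_mul_prod, Finset.sum_mul_sum, Finset.prod_mul_distrib]
    refine Finset.sum_congr rfl fun σ _ ↦ Finset.sum_congr rfl fun τ _ ↦ ?_
    ring
  have hint (σ τ : Perm ι) : Integrable (fun y : ι → α ↦ ∏ j, f (σ j) (y j) * g (τ j) (y j))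
      (Measure.pi fun _ ↦ μ) :=
    Integrable.fintype_prod fun j ↦ hfg (σ j) (τ j)
  simp_rw [hexpand]
  rw [← sum_perm_sum_perm_sign_mul_prod, integral_finsetSum _ fun σ _ ↦
    integrable_finsetSum _ fun τ _ ↦ (hint σ τ).const_mul _]
  refine Finset.sum_congr rfl fun σ _ ↦ ?_
  rw [integral_finsetSum _ fun τ _ ↦ (hint σ τ).const_mul _]
  refine Finset.sum_congr rfl fun τ _ ↦ ?_
  rw [integral_const_mul, integral_fintype_prod_eq_prod (fun j t ↦ f (σ j) t * g (τ j) t)]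
  rfl

theorem Matrix.det_of_pow_mul_mul_pow {R : Type*} [CommRing R] {n : ℕ} (c : R) (a v : Fin n → R) :
    (Matrix.of fun k l : Fin n ↦ c ^ (l : ℕ) * (a k * v k ^ (l : ℕ))).det =
      c ^ (n * (n - 1) / 2) * (∏ k, a k) * ∏ j, ∏ k ∈ Ioi j, (v k - v j) := by
  have hc : ∏ l : Fin n, c ^ (l : ℕ) = c ^ (n * (n - 1) / 2) := by
    rw [Finset.prod_pow_eq_pow_sum, Fin.sum_univ_eq_sum_range (fun i ↦ i) n, Finset.sum_range_id]
  calc _ = (∏ l : Fin n, c ^ (l : ℕ)) * (Matrix.of fun k l ↦ a k * vandermonde v k l).det :=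
        det_mul_row (fun l : Fin n ↦ c ^ (l : ℕ)) (Matrix.of fun k l ↦ a k * vandermonde v k l)
    _ = _ := by rw [det_mul_column, det_vandermonde, hc, mul_assoc]

theorem integrableOn_pow_mul_exp_neg_div {x : ℝ} (hx : 0 < x) (p : ℕ) :
    IntegrableOn (fun t : ℝ ↦ t ^ p * exp (-(t / x))) (Ioi 0) := by
  refine (integrableOn_rpow_mul_exp_neg_mul_rpow (p := 1) (s := p) (b := x⁻¹)
    (neg_one_lt_zero.trans_le p.cast_nonneg) one_pos (inv_pos.2 hx)).congr_fun
      (fun t _ ↦ ?_) measurableSet_Ioi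
  simp only [rpow_one, rpow_natCast, div_eq_inv_mul, neg_mul]

theorem integral_pow_mul_exp_neg_div {x : ℝ} (hx : 0 < x) (p : ℕ) :
    ∫ t in Ioi 0, t ^ p * exp (-(t / x)) = p ! * x ^ (p + 1) := by
  have h := integral_rpow_mul_exp_neg_mul_Ioi (a := p + 1) (r := x⁻¹) (by positivity) (inv_pos.2 hx)
  simp only [add_sub_cancel_right, rpow_natCast, ← div_eq_inv_mul] at h
  rw [h, Gamma_nat_eq_factorial, one_div, inv_inv, ← Nat.cast_add_one, rpow_natCast, mul_comm]

theorem sqrt_pow_mul_besselI_eq_tsum (b : ℝ) (k : ℕ) {t : ℝ} (ht : 0 ≤ t) :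
    √t ^ k * besselI k (2 * b * √t) =
      ∑' m : ℕ, b ^ (2 * m + k) / (m ! * (m + k)!) * t ^ (m + k) := by
  rw [besselI, ← tsum_mul_left]
  refine tsum_congr fun m ↦ ?_
  have hpow : √t ^ k * √t ^ (2 * m + k) = t ^ (m + k) := by
    rw [← pow_add, show k + (2 * m + k) = 2 * (m + k) by ring, pow_mul, sq_sqrt ht]
  rw [show 2 * b * √t / 2 = b * √t by ring, mul_pow, ← hpow]
  ring

noncomputable def besselLaplaceTerm (b x : ℝ) (k m : ℕ) (t : ℝ) : ℝ :=
  b ^ (2 * m + k) / (m ! * (m + k)!) * (t ^ (m + k) * exp (-(t / x)))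

theorem exp_neg_div_mul_besselI_eq_tsum (b x : ℝ) (k : ℕ) {t : ℝ} (ht : 0 ≤ t) :
    exp (-(t / x)) * (√t ^ k * besselI k (2 * b * √t)) = ∑' m, besselLaplaceTerm b x k m t := by
  rw [sqrt_pow_mul_besselI_eq_tsum b k ht, ← tsum_mul_left]
  refine tsum_congr fun m ↦ ?_
  rw [besselLaplaceTerm]
  ring

theorem integrableOn_besselLaplaceTerm (b : ℝ) {x : ℝ} (hx : 0 < x) (k m : ℕ) :
    IntegrableOn (besselLaplaceTerm b x k m) (Ioi 0) :=
  (integrableOn_pow_mul_exp_neg_div hx (m + k)).const_mul _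

theorem integral_besselLaplaceTerm (b : ℝ) {x : ℝ} (hx : 0 < x) (k m : ℕ) :
    ∫ t in Ioi 0, besselLaplaceTerm b x k m t = b ^ k * x ^ (k + 1) * ((b ^ 2 * x) ^ m / m !) := by
  simp only [besselLaplaceTerm]
  rw [integral_const_mul, integral_pow_mul_exp_neg_div hx]
  field_simp
  ring

theorem norm_besselLaplaceTerm (b x : ℝ) (k m : ℕ) {t : ℝ} (ht : 0 ≤ t) :
    ‖besselLaplaceTerm b x k m t‖ = besselLaplaceTerm |b| x k m t := by
  simp only [besselLaplaceTerm, norm_mul, norm_div, norm_pow, Real.norm_eq_abs, abs_of_nonneg ht,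
    abs_exp, Nat.abs_cast]

theorem summable_integral_norm_besselLaplaceTerm (b : ℝ) {x : ℝ} (hx : 0 < x) (k : ℕ) :
    Summable fun m ↦ ∫ t in Ioi 0, ‖besselLaplaceTerm b x k m t‖ := by
  have h m : ∫ t in Ioi 0, ‖besselLaplaceTerm b x k m t‖ =
      |b| ^ k * x ^ (k + 1) * ((|b| ^ 2 * x) ^ m / m !) := by
    rw [← integral_besselLaplaceTerm |b| hx]
    exact setIntegral_congr_fun measurableSet_Ioi fun t ht ↦ norm_besselLaplaceTerm b x k m ht.le
  simp_rw [h]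
  exact (summable_pow_div_factorial _).mul_left _

theorem integrableOn_exp_neg_div_mul_besselI (b : ℝ) {x : ℝ} (hx : 0 < x) (k : ℕ) :
    IntegrableOn (fun t ↦ exp (-(t / x)) * (√t ^ k * besselI k (2 * b * √t))) (Ioi 0) := by
  refine (integrable_tsum_of_summable_integral_norm (integrableOn_besselLaplaceTerm b hx k)
    (summable_integral_norm_besselLaplaceTerm b hx k)).congr ?_
  filter_upwards [ae_restrict_mem measurableSet_Ioi] with t ht
  exact (exp_neg_div_mul_besselI_eq_tsum b x k ht.le).symm

theorem integral_exp_neg_div_mul_besselI (b : ℝ) {x : ℝ} (hx : 0 < x) (k : ℕ) :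
    ∫ t in Ioi 0, exp (-(t / x)) * (√t ^ k * besselI k (2 * b * √t)) =
      b ^ k * x ^ (k + 1) * exp (b ^ 2 * x) := by
  calc _ = ∫ t in Ioi 0, ∑' m, besselLaplaceTerm b x k m t :=
        setIntegral_congr_fun measurableSet_Ioi fun t ht ↦
          exp_neg_div_mul_besselI_eq_tsum b x k ht.le
    _ = ∑' m, b ^ k * x ^ (k + 1) * ((b ^ 2 * x) ^ m / m !) := by
        rw [← integral_tsum_of_summable_integral_norm (integrableOn_besselLaplaceTerm b hx k)
          (summable_integral_norm_besselLaplaceTerm b hx k)]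
        exact tsum_congr (integral_besselLaplaceTerm b hx k)
    _ = _ := by
        rw [tsum_mul_left, exp_eq_exp_ℝ, ← (NormedSpace.expSeries_div_hasSum_exp _).tsum_eq]

theorem integral_det_exp_mul_det_besselI_general (n : ℕ) (b : ℝ)
    (x : Fin n → ℝ) (hx : ∀ k, 0 < x k) :
    (∫ y in {y : Fin n → ℝ | ∀ j, 0 < y j},
        (Matrix.of fun j k : Fin n => Real.exp (-(y j / x k))).det *
        (Matrix.of fun j k : Fin n =>
          (Real.sqrt (y j)) ^ (k : ℕ) * besselI k (2 * b * Real.sqrt (y j))).det)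
      = (n.factorial : ℝ) * b ^ (n * (n - 1) / 2) *
        (∏ k, x k * Real.exp (b ^ 2 * x k)) * (∏ j, ∏ k ∈ Finset.Ioi j, (x k - x j)) := by
  have hset : {y : Fin n → ℝ | ∀ j, 0 < y j} = Set.univ.pi fun _ ↦ Ioi 0 := by
    ext y
    simp
  rw [hset, volume_pi, Measure.restrict_pi_pi]
  refine (integral_det_mul_det_pi _ (fun k t ↦ exp (-(t / x k)))
    (fun l t ↦ √t ^ (l : ℕ) * besselI l (2 * b * √t))
    fun k l ↦ integrableOn_exp_neg_div_mul_besselI b (hx k) l).trans ?_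
  simp_rw [integral_exp_neg_div_mul_besselI b (hx _), Fintype.card_fin]
  have hentries :
      (Matrix.of fun k l : Fin n ↦ b ^ (l : ℕ) * x k ^ ((l : ℕ) + 1) * exp (b ^ 2 * x k)) =
      Matrix.of fun k l : Fin n ↦ b ^ (l : ℕ) * (x k * exp (b ^ 2 * x k) * x k ^ (l : ℕ)) := by
    ext k l
    simp only [of_apply]
    ring
  rw [hentries, det_of_pow_mul_mul_pow]
  ring

/-- Let `n ≥ 1`, `b > 0`, and `x_1,…,x_n > 0` pairwise distinct.  Then
`∫_{(0,∞)^n} det[e^(−y_j/x_k)] · det[y_j^((k−1)/2) I_(k−1)(2b√y_j)] dy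
  = n! b^(n(n−1)/2) (∏_k x_k e^(b²x_k)) Δ_n(x)`. -/
theorem integral_det_exp_mul_det_besselI (n : ℕ) (hn : 1 ≤ n) (b : ℝ) (hb : 0 < b)
    (x : Fin n → ℝ) (hx : ∀ k, 0 < x k) (hdist : Function.Injective x) :
    (∫ y in {y : Fin n → ℝ | ∀ j, 0 < y j},
        (Matrix.of fun j k : Fin n => Real.exp (-(y j / x k))).det *
        (Matrix.of fun j k : Fin n =>
          (Real.sqrt (y j)) ^ (k : ℕ) * besselI k (2 * b * Real.sqrt (y j))).det)
      = (n.factorial : ℝ) * b ^ (n * (n - 1) / 2) *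
        (∏ k, x k * Real.exp (b ^ 2 * x k)) * (∏ j, ∏ k ∈ Finset.Ioi j, (x k - x j)) :=
  integral_det_exp_mul_det_besselI_general n b x hx
end
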